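/- arXiv:2206.08993 — 3 statements merged into one kernel-verified Lean document; each statement's English description precedes it below -/
import Mathlib

section
/- For weak compositions α, γ of length n, the following are equivalent: (1) γ ≤ α in Bruhat order; (2) every reverse semistandard Young tableau T of shape γ⁺ with left key K₋(T) ≤ key(γ) also satisfies K₋(T) ≤ key(α), i.e., RSSYT(γ) ⊆ RSSYT(α). -/
/-- The `j`-th largest element (0-indexed) of a finite set of `Fin n`,
viewed as an element of `[n] = {1,...,n}` via `i ↦ i + 1`; `0` as default. -/
def jthLargestF (n : ℕ) (S : Finset (Fin n)) (j : ℕ) : ℕ :=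
  (((Finset.sort S (· ≤ ·)).reverse).map (fun i => (i : ℕ) + 1)).getD j 0

/-- The `j`-th smallest element (0-indexed), similarly. -/
def jthSmallestF (n : ℕ) (S : Finset (Fin n)) (j : ℕ) : ℕ :=
  ((Finset.sort S (· ≤ ·)).map (fun i => (i : ℕ) + 1)).getD j 0

/-- Order on subsets of `[n]`: equal cardinality and `j`-th largest elements compare. -/
def setLEF (n : ℕ) (S T : Finset (Fin n)) : Prop :=
  S.card = T.card ∧ ∀ j < S.card, jthLargestF n S j ≤ jthLargestF n T j

/-- The `c`-th column of the key tableau of the weak composition `α`: `{i : α i ≥ c}`. -/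
def col (n : ℕ) (α : Fin n → ℕ) (c : ℕ) : Finset (Fin n) :=
  Finset.univ.filter (fun i => c ≤ α i)

/-- The support of a weak composition. -/
def suppC (n : ℕ) (α : Fin n → ℕ) : Finset (Fin n) :=
  Finset.univ.filter (fun i => 0 < α i)

/-- Bruhat order on weak compositions: key tableaux have the same shape and
compare entry-wise, expressed column by column. -/
def bruhatLE (n : ℕ) (γ α : Fin n → ℕ) : Prop :=
  ∀ c : ℕ, 1 ≤ c → setLEF n (col n γ c) (col n α c)

/-- `μ` is the Bruhat-minimum of `{γ : γ ≥ α, supp γ ⊆ S}`. -/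
def isBruhatMin (n : ℕ) (α : Fin n → ℕ) (S : Finset (Fin n)) (μ : Fin n → ℕ) : Prop :=
  bruhatLE n α μ ∧ suppC n μ ⊆ S ∧
    ∀ γ : Fin n → ℕ, bruhatLE n α γ → suppC n γ ⊆ S → bruhatLE n μ γ

/-- `μ` is the Bruhat-maximum of `{γ : γ ≤ α, supp γ ⊆ S}`. -/
def isBruhatMax (n : ℕ) (α : Fin n → ℕ) (S : Finset (Fin n)) (μ : Fin n → ℕ) : Prop :=
  bruhatLE n μ α ∧ suppC n μ ⊆ S ∧
    ∀ γ : Fin n → ℕ, bruhatLE n γ α → suppC n γ ⊆ S → bruhatLE n γ μ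

/-- `γ` is obtained from `α` by a single left swap: exchange parts `α i < α j` with `i < j`. -/
def leftSwapStep (n : ℕ) (γ α : Fin n → ℕ) : Prop :=
  ∃ i j : Fin n, i < j ∧ α i < α j ∧ γ = fun k => α (Equiv.swap i j k)

/-- The left swap order: reflexive-transitive closure of single left swaps. -/
def leftSwapLE (n : ℕ) (γ α : Fin n → ℕ) : Prop :=
  Relation.ReflTransGen (leftSwapStep n) γ α

/-- `B = C ◁ A`: there is a strictly increasing choice `b` of elements of `C`,
`b k` being the smallest element of `C` that is `≥` the `k`-th smallest element
of `A` and exceeds all previously chosen elements, with `B` the set of chosen elements. -/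
def isLhd (n : ℕ) (C A B : Finset (Fin n)) : Prop :=
  ∃ b : Fin A.card → Fin n, StrictMono b ∧ (∀ k, b k ∈ C) ∧
    (∀ k : Fin A.card, jthSmallestF n A k ≤ (b k : ℕ) + 1) ∧
    (∀ k : Fin A.card, ∀ c ∈ C, jthSmallestF n A k ≤ (c : ℕ) + 1 →
      (∀ j : Fin A.card, j < k → b j < c) → b k ≤ c) ∧
    B = Finset.image b Finset.univ

/-- `lhdChain [C₁, ..., C_k] B` means `B = C₁ ◁ (C₂ ◁ (⋯ ◁ C_k))`. -/
def lhdChain (n : ℕ) : List (Finset (Fin n)) → Finset (Fin n) → Prop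
  | [], B => B = ∅
  | [C], B => B = C
  | C :: D :: rest, B => ∃ B', lhdChain n (D :: rest) B' ∧ isLhd n C B' B

/-- `T ∈ RSSYT(α)`: a reverse semistandard Young tableau of shape `α⁺`, encoded by its
columns (strictly decreasing sets, rows weakly decreasing), whose left key is
entry-wise at most `key α`. -/
def memRSSYT (n : ℕ) (α : Fin n → ℕ) (T : ℕ → Finset (Fin n)) : Prop :=
  (∀ c, 1 ≤ c → (T c).card = (col n α c).card) ∧
  (∀ c, 1 ≤ c → ∀ k < (T (c+1)).card, jthLargestF n (T (c+1)) k ≤ jthLargestF n (T c) k) ∧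
  (∀ c, 1 ≤ c → ∃ B, lhdChain n ((List.range c).map (fun i => T (i+1))) B ∧
    setLEF n B (col n α c))

/-- `(L, E) ∈ RSVT(α)`: a reverse set-valued tableau of shape `α⁺` encoded as a diagram
pair by columns: `L c` the leading entries and `E c` the extra entries of column `c`,
with left key (of the leading tableau) entry-wise at most `key α`. -/
def memRSVT (n : ℕ) (α : Fin n → ℕ) (L E : ℕ → Finset (Fin n)) : Prop :=
  (∀ c, 1 ≤ c → Disjoint (L c) (E c)) ∧
  (∀ c, 1 ≤ c → (L c).card = (col n α c).card) ∧
  (∀ c, 1 ≤ c → ∀ k < (L (c+1)).card, jthLargestF n (L (c+1)) k ≤ jthLargestF n (L c) k) ∧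
  (∀ c, 1 ≤ c → ∀ e ∈ E c,
    ((L (c+1)).filter (fun l => e < l)).card < ((L c).filter (fun l => e < l)).card) ∧
  (∀ c, 1 ≤ c → ∃ B, lhdChain n ((List.range c).map (fun i => L (i+1))) B ∧
    setLEF n B (col n α c))

/-- `(L, E)` is a valid reverse set-valued tableau (of some shape), without any
left-key condition. -/
def isValidRSVT (n : ℕ) (L E : ℕ → Finset (Fin n)) : Prop :=
  (∀ c, 1 ≤ c → Disjoint (L c) (E c)) ∧
  (∀ c, 1 ≤ c → (L (c+1)).card ≤ (L c).card) ∧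
  (∃ N, ∀ c, N ≤ c → L c = ∅ ∧ E c = ∅) ∧
  (∀ c, 1 ≤ c → ∀ k < (L (c+1)).card, jthLargestF n (L (c+1)) k ≤ jthLargestF n (L c) k) ∧
  (∀ c, 1 ≤ c → ∀ e ∈ E c,
    ((L (c+1)).filter (fun l => e < l)).card < ((L c).filter (fun l => e < l)).card)

/-- `j`-th largest element of a finite set of naturals (0-indexed), default `0`. -/
def jthLargestN (S : Finset ℕ) (j : ℕ) : ℕ :=
  ((Finset.sort S (· ≤ ·)).reverse).getD j 0

/-- `j`-th smallest element of a finite set of naturals (0-indexed), default `0`. -/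
def jthSmallestN (S : Finset ℕ) (j : ℕ) : ℕ :=
  (Finset.sort S (· ≤ ·)).getD j 0

/-!
For `γ ≤ α` every `T ∈ RSSYT(γ)` lies in `RSSYT(α)` because `K₋(T) ≤ key(γ) ≤ key(α)`.
Conversely, `key(γ)` is itself a tableau in `RSSYT(γ)`: its columns are nested, and
`C ◁ A = A` whenever `A ⊆ C`, so its left key is `key(γ)`. Since `◁` is determined by its
arguments, `key(γ) ∈ RSSYT(α)` says exactly that `key(γ) ≤ key(α)`.
-/

lemma List.getD_zero_antitone_of_pairwise_ge {l : List ℕ} (h : l.Pairwise (· ≥ ·)) {i j : ℕ}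
    (hij : i ≤ j) : l.getD j 0 ≤ l.getD i 0 := by
  rcases lt_or_ge j l.length with hj | hj
  · rw [List.getD_eq_getElem _ _ hj, List.getD_eq_getElem _ _ (hij.trans_lt hj)]
    rcases hij.eq_or_lt with rfl | hlt
    · exact le_rfl
    · exact h.rel_get_of_lt (a := ⟨i, hij.trans_lt hj⟩) (b := ⟨j, hj⟩) hlt
  · rw [List.getD_eq_default _ _ hj]
    exact Nat.zero_le _

lemma List.Sublist.getD_zero_le_of_pairwise_ge {l m : List ℕ} (h : l.Sublist m)
    (hm : m.Pairwise (· ≥ ·)) (j : ℕ) : l.getD j 0 ≤ m.getD j 0 := by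
  induction h generalizing j with
  | slnil => simp
  | @cons l m a h ih =>
    cases j with
    | zero =>
      cases l with
      | nil => simp
      | cons x xs => simpa using (List.pairwise_cons.mp hm).1 x (h.subset List.mem_cons_self)
    | succ j =>
      rw [List.getD_cons_succ]
      exact (ih hm.of_cons (j + 1)).trans
        (List.getD_zero_antitone_of_pairwise_ge hm.of_cons (Nat.le_succ j))
  | @cons_cons l m a h ih =>
    cases j with
    | zero => simp
    | succ j => simpa only [List.getD_cons_succ] using ih hm.of_cons j

section SetOrder

variable {n : ℕ}

lemma jthLargestF_eq_getD (S : Finset (Fin n)) (j : ℕ) :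
    jthLargestF n S j =
      (((Finset.sort S (· ≤ ·)).reverse).map (fun i : Fin n => (i : ℕ) + 1)).getD j 0 := by
  simp only [jthLargestF, bind_pure_comp, List.map_eq_map, List.map_map]
  rfl

lemma jthSmallestF_eq_orderEmbOfFin (A : Finset (Fin n)) (k : Fin A.card) :
    jthSmallestF n A k = (A.orderEmbOfFin rfl k : ℕ) + 1 := by
  simp only [jthSmallestF, bind_pure_comp, List.map_eq_map, List.map_map]
  rw [List.getD_eq_getElem _ _ (by simp), List.getElem_map, Finset.orderEmbOfFin_apply]
  rfl

lemma jthLargestF_mono {S T : Finset (Fin n)} (h : S ⊆ T) (j : ℕ) :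
    jthLargestF n S j ≤ jthLargestF n T j := by
  have hsort : (Finset.sort S (· ≤ ·)).Sublist (Finset.sort T (· ≤ ·)) :=
    List.sublist_of_subperm_of_pairwise
      (List.subperm_of_subset (Finset.sort_nodup _ _)
        (fun a ha => (Finset.mem_sort _).mpr (h ((Finset.mem_sort _).mp ha))))
      (Finset.pairwise_sort _ _) (Finset.pairwise_sort _ _)
  have hdesc : (((Finset.sort T (· ≤ ·)).reverse).map
      (fun i : Fin n => (i : ℕ) + 1)).Pairwise (· ≥ ·) :=
    List.Pairwise.map _ (fun a b (hab : b ≤ a) => Nat.succ_le_succ hab)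
      (List.pairwise_reverse.mpr (Finset.pairwise_sort _ _))
  rw [jthLargestF_eq_getD, jthLargestF_eq_getD]
  exact (hsort.reverse.map _).getD_zero_le_of_pairwise_ge hdesc j

lemma setLEF_refl (S : Finset (Fin n)) : setLEF n S S :=
  ⟨rfl, fun _ _ => le_rfl⟩

lemma setLEF_trans {S T U : Finset (Fin n)} (h₁ : setLEF n S T) (h₂ : setLEF n T U) :
    setLEF n S U :=
  ⟨h₁.1.trans h₂.1, fun j hj => (h₁.2 j hj).trans (h₂.2 j (h₁.1 ▸ hj))⟩

end SetOrder

section LeftKey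

variable {n : ℕ}

lemma isLhd_of_subset {C A : Finset (Fin n)} (hAC : A ⊆ C) : isLhd n C A A := by
  refine ⟨A.orderEmbOfFin rfl, (A.orderEmbOfFin rfl).strictMono,
    fun k => hAC (A.orderEmbOfFin_mem rfl k), fun k => ?_, fun k c _ hkc _ => ?_,
    (A.image_orderEmbOfFin_univ rfl).symm⟩
  · rw [jthSmallestF_eq_orderEmbOfFin]
  · rw [jthSmallestF_eq_orderEmbOfFin] at hkc
    exact Fin.le_def.mpr (by omega)

lemma isLhd_unique {C A B₁ B₂ : Finset (Fin n)} (h₁ : isLhd n C A B₁) (h₂ : isLhd n C A B₂) :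
    B₁ = B₂ := by
  obtain ⟨b₁, hm₁, hC₁, hge₁, hmin₁, rfl⟩ := h₁
  obtain ⟨b₂, hm₂, hC₂, hge₂, hmin₂, rfl⟩ := h₂
  suffices b₁ = b₂ by rw [this]
  funext k
  induction k using WellFoundedLT.induction with
  | _ k ih =>
    exact le_antisymm
      (hmin₁ k (b₂ k) (hC₂ k) (hge₂ k) fun j hj => (ih j hj).trans_lt (hm₂ hj))
      (hmin₂ k (b₁ k) (hC₁ k) (hge₁ k) fun j hj => (ih j hj).symm.trans_lt (hm₁ hj))

lemma lhdChain_unique : ∀ {L : List (Finset (Fin n))} {B₁ B₂ : Finset (Fin n)},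
    lhdChain n L B₁ → lhdChain n L B₂ → B₁ = B₂
  | [], _, _, h₁, h₂ => h₁.trans h₂.symm
  | [_], _, _, h₁, h₂ => h₁.trans h₂.symm
  | _ :: _ :: _, _, _, ⟨_, hc₁, hl₁⟩, ⟨_, hc₂, hl₂⟩ =>
    isLhd_unique hl₁ (lhdChain_unique hc₂ hc₁ ▸ hl₂)

lemma lhdChain_append_of_subset : ∀ (L : List (Finset (Fin n))) {C : Finset (Fin n)},
    (∀ X ∈ L, C ⊆ X) → lhdChain n (L ++ [C]) C
  | [], _, _ => rfl
  | [X], _, h => ⟨_, rfl, isLhd_of_subset (h X List.mem_cons_self)⟩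
  | X :: Y :: L, C, h =>
    ⟨C, lhdChain_append_of_subset (Y :: L) fun Z hZ => h Z (List.mem_cons_of_mem X hZ),
      isLhd_of_subset (h X List.mem_cons_self)⟩

end LeftKey

section Key

variable {n : ℕ}

lemma col_antitone (γ : Fin n → ℕ) : Antitone (col n γ) := fun _ _ hcd _ hi => by
  simp only [col, Finset.mem_filter, Finset.mem_univ, true_and] at hi ⊢
  omega

lemma lhdChain_col (γ : Fin n → ℕ) {c : ℕ} (hc : 1 ≤ c) :
    lhdChain n ((List.range c).map fun i => col n γ (i + 1)) (col n γ c) := by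
  obtain ⟨d, rfl⟩ := Nat.exists_eq_add_of_le' hc
  rw [List.range_succ, List.map_append, List.map_singleton]
  refine lhdChain_append_of_subset _ fun X hX => ?_
  obtain ⟨i, hi, rfl⟩ := List.mem_map.mp hX
  exact col_antitone γ (by rw [List.mem_range] at hi; omega)

lemma memRSSYT_col (γ : Fin n → ℕ) : memRSSYT n γ (col n γ) :=
  ⟨fun _ _ => rfl,
    fun c _ k _ => jthLargestF_mono (col_antitone γ c.le_succ) k,
    fun _ hc => ⟨_, lhdChain_col γ hc, setLEF_refl _⟩⟩

lemma memRSSYT.of_bruhatLE {γ α : Fin n → ℕ} {T : ℕ → Finset (Fin n)}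
    (hT : memRSSYT n γ T) (hγα : bruhatLE n γ α) : memRSSYT n α T := by
  obtain ⟨hcard, hrow, hkey⟩ := hT
  refine ⟨fun c hc => (hcard c hc).trans (hγα c hc).1, hrow, fun c hc => ?_⟩
  obtain ⟨B, hB, hle⟩ := hkey c hc
  exact ⟨B, hB, setLEF_trans hle (hγα c hc)⟩

end Key

/-- `γ ≤ α` in Bruhat order iff `RSSYT(γ) ⊆ RSSYT(α)`. -/
theorem stmt14 (n : ℕ) (α γ : Fin n → ℕ) :
    bruhatLE n γ α ↔ (∀ T : ℕ → Finset (Fin n), memRSSYT n γ T → memRSSYT n α T) := by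
  refine ⟨fun hγα T hT => hT.of_bruhatLE hγα, fun h c hc => ?_⟩
  obtain ⟨B, hB, hle⟩ := (h _ (memRSSYT_col γ)).2.2 c hc
  rwa [lhdChain_unique hB (lhdChain_col γ hc)] at hle
end

section
/- Let T be a reverse set-valued tableau written as the pair (L₁, E₁, t) where L₁ is the set of leading entries in column 1, E₁ the set of extra entries in column 1, and t the tableau formed by the remaining columns. If K₋(t) = key(γ) for a weak composition γ, then wt(K₋(T)) = 𝟙_{L₁} + m(γ, L₁). -/
/-!
The first column of `K₋(T)` is `L₁`, and since the columns of `K₋(t)` are those of `key γ`, its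
column `c + 1` is `L₁ ◁ col γ c`. The set `L₁ ◁ A` is chosen greedily: its `k`-th element is the
least element of `L₁` that is at least the `k`-th element of `A` and exceeds the previous choice.
Greediness makes `L₁ ◁ A` dominate `A` and lie below every subset of `L₁` dominating `A`, so the
columns `L₁ ◁ col γ c` are those of `m(γ, L₁)` as soon as they form a key. They do, because
`L₁ ◁ A` is monotone in `A`: deleting one element of `A` moves each later greedy choice to one of
its two neighbouring choices for `A`.
-/

namespace LeftKey

variable {n : ℕ}

section Enumeration

variable {S A B : Finset (Fin n)} {j k : ℕ}

/-- The `k`-th smallest element of `S` (0-indexed) as a natural number, `0` if `k ≥ #S`. -/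
def nthVal (S : Finset (Fin n)) (k : ℕ) : ℕ :=
  if h : k < S.card then (S.orderEmbOfFin rfl ⟨k, h⟩ : ℕ) else 0

lemma nthVal_of_lt (h : k < S.card) : nthVal S k = (S.orderEmbOfFin rfl ⟨k, h⟩ : ℕ) :=
  dif_pos h

lemma exists_mem_val_eq_nthVal (h : k < S.card) : ∃ y ∈ S, (y : ℕ) = nthVal S k :=
  ⟨_, S.orderEmbOfFin_mem rfl _, (nthVal_of_lt h).symm⟩

lemma nthVal_lt_nthVal (hjk : j < k) (hk : k < S.card) : nthVal S j < nthVal S k := by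
  rw [nthVal_of_lt (hjk.trans hk), nthVal_of_lt hk]
  exact (S.orderEmbOfFin rfl).strictMono (Fin.mk_lt_mk.mpr hjk)

lemma nthVal_le_nthVal (hjk : j ≤ k) (hk : k < S.card) : nthVal S j ≤ nthVal S k := by
  rw [nthVal_of_lt (hjk.trans_lt hk), nthVal_of_lt hk]
  exact (S.orderEmbOfFin rfl).monotone (Fin.mk_le_mk.mpr hjk)

lemma nthVal_eq_of_strictMono {m : ℕ} (hm : S.card = m) {f : Fin m → Fin n} (hfS : ∀ i, f i ∈ S)
    (hf : StrictMono f) (hk : k < m) : nthVal S k = f ⟨k, hk⟩ := by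
  subst hm
  rw [Finset.orderEmbOfFin_unique rfl hfS hf, nthVal_of_lt hk]

lemma jthSmallestF_eq_nthVal (h : k < S.card) : jthSmallestF n S k = nthVal S k + 1 := by
  rw [nthVal_of_lt h, Finset.orderEmbOfFin_apply]
  simp [jthSmallestF, ← List.map_eq_flatMap, List.getD_eq_getElem?_getD, h]

lemma jthLargestF_eq_nthVal (h : j < S.card) :
    jthLargestF n S j = nthVal S (S.card - 1 - j) + 1 := by
  rw [nthVal_of_lt (by omega), Finset.orderEmbOfFin_apply]
  simp [jthLargestF, ← List.map_eq_flatMap, List.getD_eq_getElem?_getD, h]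

lemma card_filter_eq_card_filter_orderEmbOfFin (p : Fin n → Prop) [DecidablePred p] :
    (S.filter p).card = (Finset.univ.filter fun i => p (S.orderEmbOfFin rfl i)).card := by
  conv_lhs => rw [← S.map_orderEmbOfFin_univ rfl, Finset.filter_map, Finset.card_map]
  rfl

lemma card_filter_nthVal_le (h : k < S.card) :
    (S.filter fun y : Fin n => nthVal S k ≤ y).card = S.card - k := by
  rw [card_filter_eq_card_filter_orderEmbOfFin, ← Fin.card_Ici (⟨k, h⟩ : Fin S.card)]
  congr 1
  ext i
  simp [nthVal_of_lt h]

lemma card_filter_nthVal_lt (h : k < S.card) :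
    (S.filter fun y : Fin n => nthVal S k < y).card = S.card - 1 - k := by
  rw [card_filter_eq_card_filter_orderEmbOfFin, ← Fin.card_Ioi (⟨k, h⟩ : Fin S.card)]
  congr 1
  ext i
  simp [nthVal_of_lt h]

lemma jthLargestF_le_of_subset (hAB : A ⊆ B) (hj : j < A.card) :
    jthLargestF n A j ≤ jthLargestF n B j := by
  have hjB : j < B.card := hj.trans_le (Finset.card_le_card hAB)
  rw [jthLargestF_eq_nthVal hj, jthLargestF_eq_nthVal hjB, add_le_add_iff_right]
  by_contra! hlt
  -- the `j + 1` largest elements of `A` lie in `B` above its `j`-th largest element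
  have hsub : A.filter (fun y : Fin n => nthVal A (A.card - 1 - j) ≤ y) ⊆
      B.filter (fun y : Fin n => nthVal B (B.card - 1 - j) < y) :=
    fun y hy => by
      simp only [Finset.mem_filter] at hy ⊢
      exact ⟨hAB hy.1, hlt.trans_le hy.2⟩
  have := Finset.card_le_card hsub
  rw [card_filter_nthVal_le (by omega), card_filter_nthVal_lt (by omega)] at this
  omega

lemma nthVal_erase {t : Fin n} (ht : t ∈ S) : ∃ a,
    (∀ k < a, nthVal (S.erase t) k = nthVal S k) ∧
    (∀ k, a ≤ k → nthVal (S.erase t) k = nthVal S (k + 1)) := by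
  obtain ⟨m, hm⟩ : ∃ m, S.card = m + 1 := ⟨S.card - 1, by
    have := Finset.card_pos.mpr ⟨t, ht⟩; omega⟩
  set e := S.orderEmbOfFin hm
  have he : ∀ k (hk : k < m + 1), nthVal S k = e ⟨k, hk⟩ := fun k hk =>
    nthVal_eq_of_strictMono hm (S.orderEmbOfFin_mem hm) e.strictMono hk
  obtain ⟨i, rfl⟩ : t ∈ Set.range e := by simpa [e] using ht
  have hcard : (S.erase (e i)).card = m := by rw [Finset.card_erase_of_mem ht, hm]; rfl
  have herase : ∀ k (hk : k < m), nthVal (S.erase (e i)) k = e (i.succAbove ⟨k, hk⟩) :=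
    fun k hk => nthVal_eq_of_strictMono hcard
      (fun j => Finset.mem_erase.mpr ⟨fun hj => i.succAbove_ne j (e.injective hj),
        S.orderEmbOfFin_mem hm _⟩) (e.strictMono.comp i.strictMono_succAbove) hk
  refine ⟨i, fun k hk => ?_, fun k hk => ?_⟩
  · rw [herase k (by omega), he k (by omega), Fin.succAbove_of_castSucc_lt _ _ hk]
    rfl
  · by_cases hkm : k < m
    · rw [herase k hkm, he (k + 1) (by omega), Fin.succAbove_of_le_castSucc _ _ hk]
      rfl
    · rw [nthVal, nthVal, dif_neg (by omega), dif_neg (by omega)]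

end Enumeration

section CeilIn

variable {C : Finset (Fin n)} {x x' : ℕ} {y : Fin n}

/-- The least element of `C` that is at least `x` (`0` if there is none). -/
noncomputable def ceilIn (C : Finset (Fin n)) (x : ℕ) : ℕ :=
  sInf {c | ∃ y ∈ C, (y : ℕ) = c ∧ x ≤ c}


lemma ceilIn_le (hy : y ∈ C) (hxy : x ≤ y) : ceilIn C x ≤ y :=
  Nat.sInf_le ⟨y, hy, rfl, hxy⟩

lemma ceilIn_spec (hy : y ∈ C) (hxy : x ≤ y) :
    ∃ z ∈ C, (z : ℕ) = ceilIn C x ∧ x ≤ ceilIn C x :=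
  Nat.sInf_mem (⟨y, y, hy, rfl, hxy⟩ : {c | ∃ y ∈ C, (y : ℕ) = c ∧ x ≤ c}.Nonempty)

lemma ceilIn_mono (hxx' : x ≤ x') (hy : y ∈ C) (hx'y : x' ≤ y) :
    ceilIn C x ≤ ceilIn C x' := by
  obtain ⟨z, hz, hzx', hx'z⟩ := ceilIn_spec hy hx'y
  rw [← hzx'] at hx'z ⊢
  exact ceilIn_le hz (hxx'.trans hx'z)

-- In the greedy recursion below, `max b (ceilIn C x + 1)` is the threshold that follows `x`.
lemma ceilIn_eq_or_eq {b : ℕ} (hxx' : x ≤ x') (hx' : x' ≤ max b (ceilIn C x + 1))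
    (hbx' : b ≤ x') (hy : y ∈ C) (hby : max b (ceilIn C x + 1) ≤ y) :
    ceilIn C x' = ceilIn C x ∨ ceilIn C x' = ceilIn C (max b (ceilIn C x + 1)) := by
  rcases (ceilIn_mono hxx' hy (hx'.trans hby)).eq_or_lt with heq | hlt
  · exact Or.inl heq.symm
  have hle := ceilIn_mono hx' hy hby
  obtain ⟨z, hz, hzx', hx'z⟩ := ceilIn_spec hy (hx'.trans hby)
  rw [← hzx'] at hlt hx'z hle ⊢
  exact Or.inr <| le_antisymm hle (ceilIn_le hz (max_le (hbx'.trans hx'z) hlt))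

end CeilIn

section Greedy

variable {A A' C : Finset (Fin n)} {j k : ℕ}

/-- `A` may stand right of `C` in a reverse semistandard tableau: the columns are top-aligned,
`A` is no longer than `C`, and rows weakly decrease. -/
def RowLE (A C : Finset (Fin n)) : Prop :=
  A.card ≤ C.card ∧ ∀ j < A.card, jthLargestF n A j ≤ jthLargestF n C j

lemma RowLE.of_subset (h : RowLE A C) (hA : A' ⊆ A) : RowLE A' C :=
  ⟨(Finset.card_le_card hA).trans h.1, fun j hj =>
    (jthLargestF_le_of_subset hA hj).trans (h.2 j (hj.trans_le (Finset.card_le_card hA)))⟩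

lemma RowLE.nthVal_le (h : RowLE A C) (hk : k < A.card) :
    nthVal A k ≤ nthVal C (C.card - A.card + k) := by
  have hcard := h.1
  have := h.2 (A.card - 1 - k) (by omega)
  rwa [jthLargestF_eq_nthVal (by omega), jthLargestF_eq_nthVal (by omega),
    show A.card - 1 - (A.card - 1 - k) = k by omega,
    show C.card - 1 - (A.card - 1 - k) = C.card - A.card + k by omega,
    add_le_add_iff_right] at this

noncomputable def greedyBound (C A : Finset (Fin n)) : ℕ → ℕ
  | 0 => nthVal A 0
  | k + 1 => max (nthVal A (k + 1)) (ceilIn C (greedyBound C A k) + 1)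

noncomputable def greedy (C A : Finset (Fin n)) (k : ℕ) : ℕ := ceilIn C (greedyBound C A k)

lemma greedyBound_succ :
    greedyBound C A (k + 1) = max (nthVal A (k + 1)) (greedy C A k + 1) := rfl

lemma nthVal_le_greedyBound : nthVal A k ≤ greedyBound C A k := by
  cases k
  · exact le_rfl
  · exact le_max_left _ _

lemma greedyBound_le_nthVal (h : RowLE A C) :
    ∀ k < A.card, greedyBound C A k ≤ nthVal C (C.card - A.card + k)
  | 0, hk => h.nthVal_le hk
  | k + 1, hk => by
    obtain ⟨y, hy, hyk⟩ := exists_mem_val_eq_nthVal (S := C) (k := C.card - A.card + k)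
      (by have := h.1; omega)
    refine max_le (h.nthVal_le hk) ((Nat.succ_le_succ ?_).trans (nthVal_lt_nthVal
      (Nat.lt_succ_self _) (by have := h.1; omega)))
    exact hyk ▸ ceilIn_le hy (hyk ▸ greedyBound_le_nthVal h k (by omega))

lemma greedy_spec (h : RowLE A C) (hk : k < A.card) :
    ∃ y ∈ C, (y : ℕ) = greedy C A k ∧ greedyBound C A k ≤ greedy C A k := by
  obtain ⟨y, hy, hyk⟩ := exists_mem_val_eq_nthVal (S := C) (k := C.card - A.card + k)
    (by have := h.1; omega)
  exact ceilIn_spec hy (hyk ▸ greedyBound_le_nthVal h k hk)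

lemma greedyBound_le_greedy (h : RowLE A C) (hk : k < A.card) :
    greedyBound C A k ≤ greedy C A k := by
  obtain ⟨-, -, -, hle⟩ := greedy_spec h hk
  exact hle

lemma nthVal_le_greedy (h : RowLE A C) (hk : k < A.card) : nthVal A k ≤ greedy C A k :=
  nthVal_le_greedyBound.trans (greedyBound_le_greedy h hk)

lemma greedy_lt_greedy (h : RowLE A C) (hjk : j < k) (hk : k < A.card) :
    greedy C A j < greedy C A k := by
  induction k, hjk using Nat.le_induction with
  | base => exact (le_max_right _ _).trans (greedyBound_le_greedy h hk)
  | succ k hjk ih =>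
    exact (ih (by omega)).trans ((le_max_right _ _).trans (greedyBound_le_greedy h hk))

lemma greedy_le_of_mem {y : Fin n} (hy : y ∈ C) (hAy : nthVal A k ≤ y)
    (hprev : ∀ j < k, greedy C A j < y) : greedy C A k ≤ y := by
  cases k
  · exact ceilIn_le hy hAy
  · exact ceilIn_le hy (max_le hAy (hprev _ (Nat.lt_succ_self _)))

section Erase

-- `A'` behaves like `A` with its `a`-th smallest element removed.
variable {a : ℕ} (hlow : ∀ k < a, nthVal A' k = nthVal A k)
  (hhigh : ∀ k, a ≤ k → nthVal A' k = nthVal A (k + 1))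
include hlow

lemma greedyBound_eq_of_lt : ∀ k < a, greedyBound C A' k = greedyBound C A k
  | 0, hk => hlow 0 hk
  | k + 1, hk => by
    rw [greedyBound_succ, greedyBound_succ, hlow _ hk, greedy, greedy,
      greedyBound_eq_of_lt k (by omega)]

lemma greedy_eq_of_lt (hk : k < a) : greedy C A' k = greedy C A k :=
  congrArg (ceilIn C) (greedyBound_eq_of_lt hlow k hk)

include hhigh

lemma greedy_eq_or_eq_of_le (h : RowLE A C) :
    ∀ k, a ≤ k → k + 1 < A.card →
      greedy C A' k = greedy C A k ∨ greedy C A' k = greedy C A (k + 1) := by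
  intro k
  induction k using Nat.strong_induction_on with
  | _ k ih =>
  intro hak hk
  have hbound : greedyBound C A k ≤ greedyBound C A' k ∧
      greedyBound C A' k ≤ greedyBound C A (k + 1) := by
    cases k with
    | zero =>
      rw [greedyBound_succ]
      exact ⟨(nthVal_le_nthVal (Nat.zero_le 1) hk).trans_eq (hhigh 0 hak).symm,
        (hhigh 0 hak).trans_le (le_max_left _ _)⟩
    | succ j =>
      have hprev : greedy C A j ≤ greedy C A' j ∧ greedy C A' j ≤ greedy C A (j + 1) := by
        have hlt := greedy_lt_greedy h (show j < j + 1 by omega) (by omega)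
        rcases lt_or_ge j a with hja | hja
        · rw [greedy_eq_of_lt hlow hja]
          exact ⟨le_rfl, hlt.le⟩
        · rcases ih j (by omega) hja (by omega) with he | he <;> rw [he] <;> omega
      rw [greedyBound_succ, greedyBound_succ, greedyBound_succ, hhigh (j + 1) hak]
      exact ⟨max_le_max (nthVal_le_nthVal (by omega) hk) (by omega),
        max_le_max le_rfl (by omega)⟩
  obtain ⟨y, hy, hyk⟩ := exists_mem_val_eq_nthVal (S := C) (k := C.card - A.card + (k + 1))
    (by have := h.1; omega)
  exact ceilIn_eq_or_eq hbound.1 hbound.2 ((hhigh k hak).symm.trans_le nthVal_le_greedyBound)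
    hy (hyk ▸ greedyBound_le_nthVal h (k + 1) hk)

end Erase

lemma exists_greedy_erase_eq (h : RowLE A C) {t : Fin n} (ht : t ∈ A) :
    ∀ k < A.card - 1, ∃ k' < A.card, greedy C (A.erase t) k = greedy C A k' := by
  obtain ⟨a, hlow, hhigh⟩ := nthVal_erase ht
  intro k hk
  rcases lt_or_ge k a with hka | hka
  · exact ⟨k, by omega, greedy_eq_of_lt hlow hka⟩
  · rcases greedy_eq_or_eq_of_le hlow hhigh h k hka (by omega) with he | he
    exacts [⟨k, by omega, he⟩, ⟨k + 1, by omega, he⟩]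

end Greedy

section Lhd

variable {A A' C : Finset (Fin n)} {k : ℕ}

/-- `C ◁ A`. -/
noncomputable def lhdSet (C A : Finset (Fin n)) : Finset (Fin n) :=
  C.filter fun y => ∃ k < A.card, greedy C A k = y

lemma lhdSet_subset : lhdSet C A ⊆ C := Finset.filter_subset _ _

@[simp] lemma lhdSet_empty : lhdSet C ∅ = ∅ := by simp [lhdSet]

lemma lhdSet_erase_subset (h : RowLE A C) {t : Fin n} (ht : t ∈ A) :
    lhdSet C (A.erase t) ⊆ lhdSet C A := by
  simp only [lhdSet, Finset.subset_iff, Finset.mem_filter, Finset.card_erase_of_mem ht]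
  rintro y ⟨hyC, k, hk, hky⟩
  obtain ⟨k', hk', he⟩ := exists_greedy_erase_eq h ht k hk
  exact ⟨hyC, k', hk', he ▸ hky⟩

lemma lhdSet_mono (h : RowLE A C) (hA : A' ⊆ A) : lhdSet C A' ⊆ lhdSet C A := by
  rw [← Finset.sdiff_sdiff_eq_self hA]
  refine Finset.induction_on' (motive := fun s => lhdSet C (A \ s) ⊆ lhdSet C A) (A \ A')
    (by simp) fun t s htA _ hts ih => ?_
  rw [Finset.sdiff_insert]
  exact (lhdSet_erase_subset (h.of_subset Finset.sdiff_subset)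
    (Finset.mem_sdiff.mpr ⟨(Finset.mem_sdiff.mp htA).1, hts⟩)).trans ih

lemma greedy_lt (h : RowLE A C) (hk : k < A.card) : greedy C A k < n := by
  obtain ⟨y, -, hy, -⟩ := greedy_spec h hk
  exact hy ▸ y.2

noncomputable def greedyFin (h : RowLE A C) (k : Fin A.card) : Fin n :=
  ⟨greedy C A k, greedy_lt h k.2⟩

lemma greedyFin_strictMono (h : RowLE A C) : StrictMono (greedyFin h) :=
  fun _ k hjk => Fin.mk_lt_mk.mpr (greedy_lt_greedy h hjk k.2)

lemma greedyFin_mem (h : RowLE A C) (k : Fin A.card) : greedyFin h k ∈ C := by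
  obtain ⟨y, hy, hyk, -⟩ := greedy_spec h k.2
  rwa [show greedyFin h k = y from Fin.ext hyk.symm]

lemma lhdSet_eq_image (h : RowLE A C) : lhdSet C A = Finset.univ.image (greedyFin h) := by
  ext y
  simp only [lhdSet, Finset.mem_filter, Finset.mem_image, Finset.mem_univ, true_and]
  constructor
  · rintro ⟨-, k, hk, hky⟩
    exact ⟨⟨k, hk⟩, Fin.ext hky⟩
  · rintro ⟨k, rfl⟩
    exact ⟨greedyFin_mem h k, k, k.2, rfl⟩

lemma card_lhdSet (h : RowLE A C) : (lhdSet C A).card = A.card := by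
  rw [lhdSet_eq_image h, Finset.card_image_of_injective _ (greedyFin_strictMono h).injective,
    Finset.card_univ, Fintype.card_fin]

lemma nthVal_lhdSet (h : RowLE A C) (hk : k < A.card) : nthVal (lhdSet C A) k = greedy C A k :=
  nthVal_eq_of_strictMono (card_lhdSet h)
    (fun k => lhdSet_eq_image h ▸ Finset.mem_image_of_mem _ (Finset.mem_univ k))
    (greedyFin_strictMono h) hk

lemma isLhd_lhdSet (h : RowLE A C) : isLhd n C A (lhdSet C A) := by
  refine ⟨greedyFin h, greedyFin_strictMono h, greedyFin_mem h, fun k => ?_,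
    fun k y hy hAy hprev => ?_, lhdSet_eq_image h⟩
  · rw [jthSmallestF_eq_nthVal k.2]
    exact Nat.succ_le_succ (nthVal_le_greedy h k.2)
  · rw [jthSmallestF_eq_nthVal k.2, add_le_add_iff_right] at hAy
    exact Fin.mk_le_mk.mpr <| greedy_le_of_mem hy hAy fun j hj => hprev ⟨j, hj.trans k.2⟩ hj

lemma nthVal_le_of_setLEF (h : setLEF n A A') (hk : k < A.card) : nthVal A k ≤ nthVal A' k := by
  simpa [h.1] using RowLE.nthVal_le ⟨h.1.le, h.2⟩ hk

lemma setLEF_of_nthVal_le (hcard : A.card = A'.card)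
    (h : ∀ k < A.card, nthVal A k ≤ nthVal A' k) : setLEF n A A' := by
  refine ⟨hcard, fun j hj => ?_⟩
  rw [jthLargestF_eq_nthVal hj, jthLargestF_eq_nthVal (hcard ▸ hj), ← hcard]
  exact Nat.succ_le_succ (h _ (by omega))

lemma setLEF_lhdSet (h : RowLE A C) : setLEF n A (lhdSet C A) :=
  setLEF_of_nthVal_le (card_lhdSet h).symm fun _ hk =>
    (nthVal_lhdSet h hk).symm ▸ nthVal_le_greedy h hk

lemma lhdSet_min (h : RowLE A C) (hA'C : A' ⊆ C) (hle : setLEF n A A') :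
    setLEF n (lhdSet C A) A' := by
  have key : ∀ k < A.card, greedy C A k ≤ nthVal A' k := by
    intro k
    induction k using Nat.strong_induction_on with
    | _ k ih =>
    intro hk
    obtain ⟨y, hy, hyk⟩ := exists_mem_val_eq_nthVal (hle.1 ▸ hk : k < A'.card)
    refine hyk ▸ greedy_le_of_mem (hA'C hy) (hyk ▸ nthVal_le_of_setLEF hle hk) fun j hj => ?_
    exact hyk ▸ (ih j hj (hj.trans hk)).trans_lt (nthVal_lt_nthVal hj (hle.1 ▸ hk))
  exact setLEF_of_nthVal_le ((card_lhdSet h).trans hle.1) fun k hk => by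
    rw [card_lhdSet h] at hk
    exact (nthVal_lhdSet h hk).symm ▸ key k hk

lemma isLhd_subset {B : Finset (Fin n)} (h : isLhd n C A B) : B ⊆ C := by
  obtain ⟨b, -, hbC, -, -, rfl⟩ := h
  simpa [Finset.image_subset_iff] using hbC

end Lhd

section Chain

variable {B : Finset (Fin n)} {f : ℕ → Finset (Fin n)} {m : ℕ}

lemma subset_of_lhdChain_range (h : lhdChain n ((List.range (m + 1)).map f) B) : B ⊆ f 0 := by
  rw [List.range_succ_eq_map, List.map_cons] at h
  cases m with
  | zero => exact h.le
  | succ m =>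
    rw [List.range_succ_eq_map, List.map_cons, List.map_cons] at h
    obtain ⟨_, -, hB⟩ := h
    exact isLhd_subset hB

lemma lhdChain_range_succ {B' : Finset (Fin n)}
    (h : lhdChain n ((List.range (m + 1)).map fun i => f (i + 1)) B')
    (hB : isLhd n (f 0) B' B) : lhdChain n ((List.range (m + 2)).map f) B := by
  simp only [List.range_succ_eq_map, List.map_cons, List.map_map] at h ⊢
  exact ⟨B', h, hB⟩

end Chain

section Composition

variable {μ : Fin n → ℕ} {S : Finset (Fin n)} {c : ℕ}

lemma exists_col_eq (B : ℕ → Finset (Fin n)) (hB : ∀ c, 1 ≤ c → B (c + 1) ⊆ B c)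
    {M : ℕ} (hM : ∀ c, M ≤ c → B c = ∅) :
    ∃ μ : Fin n → ℕ, ∀ c, 1 ≤ c → col n μ c = B c := by
  have hanti : ∀ c d, 1 ≤ c → c ≤ d → B d ⊆ B c := fun c d hc hcd => by
    induction d, hcd using Nat.le_induction with
    | base => exact le_rfl
    | succ d hcd ih => exact (hB d (hc.trans hcd)).trans ih
  refine ⟨fun i => Nat.findGreatest (fun c => i ∈ B c) M, fun c hc => ?_⟩
  ext i
  simp only [col, Finset.mem_filter, Finset.mem_univ, true_and]
  constructor
  · intro hci
    have hpos : Nat.findGreatest (fun c => i ∈ B c) M ≠ 0 := by omega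
    exact hanti c _ hc hci (Nat.findGreatest_of_ne_zero rfl hpos)
  · intro hi
    have hcM : c ≤ M := by
      by_contra! hMc
      simp [hM c hMc.le] at hi
    exact Nat.le_findGreatest hcM hi

lemma col_succ_subset : col n μ (c + 1) ⊆ col n μ c :=
  Finset.monotone_filter_right _ fun _ _ => Nat.le_of_succ_le

lemma col_eq_empty_of_sup_lt (hc : Finset.univ.sup μ < c) : col n μ c = ∅ :=
  Finset.filter_false_of_mem fun i _ => (Finset.le_sup (Finset.mem_univ i)).trans_lt hc |>.not_ge

lemma suppC_eq_col_one : suppC n μ = col n μ 1 := rfl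

lemma col_subset_suppC (hc : 1 ≤ c) : col n μ c ⊆ suppC n μ :=
  Finset.monotone_filter_right _ fun _ _ => hc.trans

lemma eq_zero_of_suppC_subset (hμ : suppC n μ ⊆ S) {i : Fin n} (hi : i ∉ S) : μ i = 0 := by
  simpa [suppC] using mt (@hμ i) hi

lemma col_indicator_add_one (hμ : suppC n μ ⊆ S) :
    col n (fun i => (if i ∈ S then 1 else 0) + μ i) 1 = S := by
  ext i
  by_cases hi : i ∈ S
  · simp [col, hi]
  · simp [col, hi, eq_zero_of_suppC_subset hμ hi]

lemma col_indicator_add_succ (hμ : suppC n μ ⊆ S) (hc : 1 ≤ c) :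
    col n (fun i => (if i ∈ S then 1 else 0) + μ i) (c + 1) = col n μ c := by
  ext i
  by_cases hi : i ∈ S
  · simp [col, hi, add_comm]
  · simp only [col, Finset.mem_filter, Finset.mem_univ, true_and, hi, if_false,
      eq_zero_of_suppC_subset hμ hi]
    omega

end Composition

end LeftKey

open LeftKey

/-- let `T` be a reverse set-valued tableau with column-1 leading entries
`L 1`, column-1 extras `E 1`, and remaining tableau `t` (columns `L (c+1)`). If
`K₋(t) = key γ`, then `wt (K₋ T) = 𝟙_{L 1} + m(γ, L 1)`, expressed column by column
(column `c` of `K₋ T` equals column `c` of `key (𝟙_{L 1} + m(γ, L 1))`). -/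
theorem stmt15 (n : ℕ) (γ : Fin n → ℕ) (L E : ℕ → Finset (Fin n))
    (hT : isValidRSVT n L E)
    (hkey : ∀ c, 1 ≤ c → ∃ B, lhdChain n ((List.range c).map (fun i => L (i+2))) B ∧
      B = col n γ c) :
    ∃ μ : Fin n → ℕ, isBruhatMin n γ (L 1) μ ∧
      ∀ c, 1 ≤ c → ∃ B, lhdChain n ((List.range c).map (fun i => L (i+1))) B ∧
        B = col n (fun i => (if i ∈ L 1 then 1 else 0) + μ i) c := by
  obtain ⟨-, hcard, -, hrows, -⟩ := hT
  have hrow : ∀ c, 1 ≤ c → RowLE (col n γ c) (L 1) := fun c hc => by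
    obtain ⟨B, hB, rfl⟩ := hkey c hc
    obtain ⟨m, rfl⟩ : ∃ m, c = m + 1 := ⟨c - 1, by omega⟩
    exact RowLE.of_subset ⟨hcard 1 le_rfl, hrows 1 le_rfl⟩ (subset_of_lhdChain_range hB)
  obtain ⟨μ, hμ⟩ := exists_col_eq (fun c => lhdSet (L 1) (col n γ c))
    (fun c hc => lhdSet_mono (hrow c hc) col_succ_subset) (M := Finset.univ.sup γ + 1)
    fun c hc => by rw [col_eq_empty_of_sup_lt hc, lhdSet_empty]
  have hsupp : suppC n μ ⊆ L 1 := by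
    rw [suppC_eq_col_one, hμ 1 le_rfl]
    exact lhdSet_subset
  refine ⟨μ, ⟨fun c hc => ?_, hsupp, fun γ' hγ' hsupp' c hc => ?_⟩, fun c hc => ?_⟩
  · rw [hμ c hc]
    exact setLEF_lhdSet (hrow c hc)
  · rw [hμ c hc]
    exact lhdSet_min (hrow c hc) ((col_subset_suppC hc).trans hsupp') (hγ' c hc)
  · obtain ⟨m, rfl⟩ : ∃ m, c = m + 1 := ⟨c - 1, by omega⟩
    cases m with
    | zero => exact ⟨L 1, rfl, (col_indicator_add_one hsupp).symm⟩
    | succ m =>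
      obtain ⟨B, hB, rfl⟩ := hkey (m + 1) (by omega)
      refine ⟨_, lhdChain_range_succ hB (isLhd_lhdSet (hrow (m + 1) (by omega))), ?_⟩
      rw [col_indicator_add_succ hsupp (by omega), hμ _ (by omega)]
end

section
/- A diagram pair (L₁, E₁, t) — where L₁, E₁ ⊆ [n] give column-1 leading and extra entries and t is the remaining diagram pair — is in RSVT(α) if and only if: (1) L₁ and E₁ are disjoint subsets of [n]; (2) L₁ ≤ supp(α); (3) letting L₁' be the row indices of leading cells in column 1 of t, for each e ∈ E₁ one has |(e,n] ∩ L₁| > |(e,n] ∩ L₁'|; and (4) t ∈ RSVT(M̄(α, L₁)), where M̄(α, L₁) is M(α, L₁) with each positive entry decreased by 1. -/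
/-!
The `◁`-chain of the first `c + 1` columns of `T` is `L₁ ◁ B'`, with `B'` the chain of the first
`c` columns of `t`, and `L₁ ◁ B'` is the least subset of `L₁` dominating `B'` in the Gale order.
Hence `L₁ ◁ B' ≤ key(α)_{c+1}` holds exactly when `B'` lies below some subset of `L₁` that is itself
`≤ key(α)_{c+1}`, equivalently below the largest such subset. Both extremal subsets come from one
greedy matching, run in the two opposite orders. The largest subsets of `L₁` below the successive
columns of `key(α)` are nested, so they are the columns of a weak composition: the Bruhat maximum
`M(α, L₁)`, whose columns shifted by one are those of `M̄(α, L₁)`.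
-/

namespace RSVT

open List

variable {β : Type*} [LinearOrder β] {n : ℕ}

/-- On increasing lists, each `a ∈ A` in turn is matched with the least element of `C` that is
`≥ a` and above all earlier matches: the greedy construction behind `isLhd`. -/
def greedyAbove : List β → List β → List β
  | _, [] => []
  | C, a :: A =>
    match C.filter (a ≤ ·) with
    | [] => []
    | c :: rest => c :: greedyAbove rest A

theorem greedyAbove_cons_of_filter_eq {C rest : List β} {a c : β} (A : List β)
    (h : C.filter (a ≤ ·) = c :: rest) : greedyAbove C (a :: A) = c :: greedyAbove rest A := by
  rw [greedyAbove, h]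

theorem greedyAbove_sublist (C A : List β) : greedyAbove C A <+ C := by
  induction A generalizing C with
  | nil => simp [greedyAbove]
  | cons a A ih =>
    cases h : C.filter (a ≤ ·) with
    | nil => simp [greedyAbove, h]
    | cons c rest =>
      rw [greedyAbove_cons_of_filter_eq A h]
      exact ((ih rest).cons_cons c).trans (h ▸ filter_sublist)

theorem greedyAbove_spec {C A B : List β} (hC : C.Pairwise (· < ·))
    (hAB : Forall₂ (· ≤ ·) A B) (hBC : B <+ C) :
    Forall₂ (· ≤ ·) A (greedyAbove C A) ∧ Forall₂ (· ≤ ·) (greedyAbove C A) B := by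
  induction hAB generalizing C with
  | nil => simp [greedyAbove]
  | @cons a b A B hab _ ih =>
    have hbF : b ∈ C.filter (a ≤ ·) := mem_filter.2 ⟨hBC.subset mem_cons_self, by simpa⟩
    obtain ⟨c, rest, hF⟩ : ∃ c rest, C.filter (a ≤ ·) = c :: rest :=
      exists_cons_of_ne_nil (ne_nil_of_mem hbF)
    have hF_sorted : (c :: rest).Pairwise (· < ·) := hF ▸ hC.filter _
    have hac : a ≤ c := of_decide_eq_true (mem_filter.1 (hF ▸ mem_cons_self : c ∈ C.filter _)).2
    have hcb : c ≤ b := by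
      rcases mem_cons.1 (hF ▸ hbF) with rfl | hb
      · exact le_rfl
      · exact (rel_of_pairwise_cons hF_sorted hb).le
    have hB_sorted : (b :: B).Pairwise (· < ·) := hC.sublist hBC
    have hB_rest : B <+ rest := by
      refine sublist_of_subperm_of_pairwise (hB_sorted.of_cons.nodup.subperm fun x hx => ?_)
        hB_sorted.of_cons hF_sorted.of_cons
      have hbx : b < x := rel_of_pairwise_cons hB_sorted hx
      have hxF : x ∈ c :: rest :=
        hF ▸ mem_filter.2 ⟨hBC.subset (mem_cons_of_mem b hx), by simpa using hab.trans hbx.le⟩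
      exact (mem_cons.1 hxF).resolve_left (hcb.trans_lt hbx).ne'
    obtain ⟨ih₁, ih₂⟩ := ih hF_sorted.of_cons hB_rest
    rw [greedyAbove_cons_of_filter_eq A hF]
    exact ⟨.cons hac ih₁, .cons hcb ih₂⟩

theorem greedyAbove_getElem_le {C A : List β} (hC : C.Pairwise (· < ·)) (hA : A.Pairwise (· < ·))
    {k : ℕ} (hk : k < (greedyAbove C A).length) (hkA : k < A.length) {x : β} (hx : x ∈ C)
    (hax : A[k] ≤ x) (hprev : ∀ j (hj : j < k), (greedyAbove C A)[j]'(hj.trans hk) < x) :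
    (greedyAbove C A)[k] ≤ x := by
  induction A generalizing C k with
  | nil => simp at hkA
  | cons a A ih =>
    cases hF : C.filter (a ≤ ·) with
    | nil => simp [greedyAbove, hF] at hk
    | cons c rest =>
      have hF_sorted : (c :: rest).Pairwise (· < ·) := hF ▸ hC.filter _
      simp only [greedyAbove_cons_of_filter_eq A hF] at hk hprev ⊢
      cases k with
      | zero =>
        have hxF : x ∈ c :: rest := hF ▸ mem_filter.2 ⟨hx, by simpa using hax⟩
        rcases mem_cons.1 hxF with rfl | hx'
        · exact le_rfl
        · exact (rel_of_pairwise_cons hF_sorted hx').le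
      | succ k =>
        have hcx : c < x := by simpa using hprev 0 k.succ_pos
        have hax' : a ≤ x := (rel_of_pairwise_cons hA (getElem_mem _)).le.trans hax
        have hxF : x ∈ c :: rest := hF ▸ mem_filter.2 ⟨hx, by simpa using hax'⟩
        have hx_rest : x ∈ rest := (mem_cons.1 hxF).resolve_left hcx.ne'
        simpa using ih hF_sorted.of_cons hA.of_cons (by simpa using hk) (by simpa using hkA)
          hx_rest (by simpa using hax) fun j hj => by simpa using hprev (j + 1) (by omega)

theorem greedyAbove_cons_of_le {C rest : List β} {a a' c : β} (hC : C.Pairwise (· < ·))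
    (hF : C.filter (a ≤ ·) = c :: rest) (haa' : a ≤ a') (A : List β) :
    greedyAbove C (a' :: A) = if a' ≤ c then c :: greedyAbove rest A
      else greedyAbove rest (a' :: A) := by
  have hF_sorted : (c :: rest).Pairwise (· < ·) := hF ▸ hC.filter _
  have hF' : C.filter (a' ≤ ·) = (c :: rest).filter (a' ≤ ·) := by
    rw [← hF, filter_filter]
    refine filter_congr fun x _ => ?_
    by_cases hx : a' ≤ x <;> simp [hx, haa'.trans]
  split_ifs with hc
  · refine greedyAbove_cons_of_filter_eq A (hF'.trans (filter_eq_self.2 fun x hx => ?_))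
    rcases mem_cons.1 hx with rfl | hx'
    · simpa using hc
    · simpa using hc.trans (rel_of_pairwise_cons hF_sorted hx').le
  · rw [filter_cons_of_neg (by simpa using hc)] at hF'
    rw [greedyAbove, greedyAbove, hF']

theorem greedyAbove_subset_of_sublist {C A A' : List β} (hC : C.Pairwise (· < ·))
    (hA : A.Pairwise (· < ·)) (hA' : A' <+ A) (hfull : (greedyAbove C A).length = A.length) :
    greedyAbove C A' ⊆ greedyAbove C A := by
  induction A generalizing C A' with
  | nil => simp [sublist_nil.1 hA', greedyAbove]
  | cons a A ih =>
    cases hF : C.filter (a ≤ ·) with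
    | nil => simp [greedyAbove, hF] at hfull
    | cons c rest =>
      have hrest : rest.Pairwise (· < ·) := (hF ▸ hC.filter _ : (c :: rest).Pairwise _).of_cons
      rw [greedyAbove_cons_of_filter_eq A hF] at hfull ⊢
      have ih' := fun {A'} (h : A' <+ A) => ih hrest hA.of_cons h (by simpa using hfull)
      cases hA' with
      | cons_cons _ h =>
        rw [greedyAbove_cons_of_filter_eq _ hF]
        exact cons_subset_cons c (ih' h)
      | cons _ h =>
        cases A' with
        | nil => simp [greedyAbove]
        | cons a' A' =>
          rw [greedyAbove_cons_of_le hC hF (rel_of_pairwise_cons hA (h.subset mem_cons_self)).le]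
          split_ifs
          · exact cons_subset_cons c (ih' ((sublist_cons_self a' A').trans h))
          · exact subset_cons_of_subset c (ih' h)

theorem getElem_le_getElem_of_sublist {l u : List β} (h : l <+ u) (hu : u.Pairwise (· ≥ ·)) :
    ∀ j (hj : j < l.length) (hju : j < u.length), l[j] ≤ u[j] := by
  induction h with
  | slnil => simp
  | @cons l u a h ih =>
    rintro (_ | j) hj hju
    · exact rel_of_pairwise_cons hu (h.subset (getElem_mem _))
    · exact (ih hu.of_cons (j + 1) hj (h.length_le.trans_lt' hj)).trans
        (pairwise_iff_getElem.1 hu.of_cons j (j + 1) _ _ j.lt_succ_self)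
  | cons_cons a h ih =>
    rintro (_ | j) hj hju
    · exact le_rfl
    · exact ih hu.of_cons j (by simpa using hj) (by simpa using hju)

def asc (S : Finset (Fin n)) : List (Fin n) := S.sort (· ≤ ·)

def desc (S : Finset (Fin n)) : List (Fin n) := (asc S).reverse

theorem asc_pairwise (S : Finset (Fin n)) : (asc S).Pairwise (· < ·) :=
  (Finset.sortedLT_sort S).pairwise

theorem desc_pairwise (S : Finset (Fin n)) : (desc S).Pairwise (· > ·) :=
  pairwise_reverse.2 (asc_pairwise S)

@[simp] theorem length_asc (S : Finset (Fin n)) : (asc S).length = S.card := Finset.length_sort _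

@[simp] theorem length_desc (S : Finset (Fin n)) : (desc S).length = S.card := by
  simp [desc]

@[simp] theorem mem_asc {S : Finset (Fin n)} {x : Fin n} : x ∈ asc S ↔ x ∈ S := Finset.mem_sort _

@[simp] theorem mem_desc {S : Finset (Fin n)} {x : Fin n} : x ∈ desc S ↔ x ∈ S := by
  simp [desc]

theorem asc_toFinset {l : List (Fin n)} (h : l.Pairwise (· < ·)) : asc l.toFinset = l :=
  (List.toFinset_sort (· ≤ ·) h.nodup).2 (h.imp le_of_lt)

theorem desc_toFinset {l : List (Fin n)} (h : l.Pairwise (· > ·)) : desc l.toFinset = l := by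
  rw [desc, ← reverse_reverse l, toFinset_reverse, asc_toFinset (pairwise_reverse.2 h)]

theorem jthLargestF_eq (S : Finset (Fin n)) {j : ℕ} (h : j < S.card) :
    jthLargestF n S j = ((desc S)[j]'(by simpa using h) : ℕ) + 1 := by
  simp [jthLargestF, desc, asc, getD_eq_getElem?_getD, ← map_eq_flatMap, getElem?_pos, h]

theorem jthSmallestF_eq (S : Finset (Fin n)) {j : ℕ} (h : j < S.card) :
    jthSmallestF n S j = ((asc S)[j]'(by simpa using h) : ℕ) + 1 := by
  simp [jthSmallestF, asc, getD_eq_getElem?_getD, ← map_eq_flatMap, getElem?_pos, h]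

theorem asc_sublist {S T : Finset (Fin n)} (h : S ⊆ T) : asc S <+ asc T :=
  sublist_of_subperm_of_pairwise
    ((asc_pairwise S).nodup.subperm fun _ hx => mem_asc.2 (h (mem_asc.1 hx)))
    (asc_pairwise S) (asc_pairwise T)

theorem desc_sublist {S T : Finset (Fin n)} (h : S ⊆ T) : desc S <+ desc T :=
  (asc_sublist h).reverse

theorem setLEF_iff_forall₂ {S T : Finset (Fin n)} :
    setLEF n S T ↔ Forall₂ (· ≤ ·) (desc S) (desc T) := by
  rw [setLEF, forall₂_iff_get]
  simp only [length_desc, get_eq_getElem]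
  refine and_congr_right fun hST => forall_congr' fun j => ?_
  constructor
  · intro h hS hT
    have hj := h hS
    rw [jthLargestF_eq S hS, jthLargestF_eq T hT] at hj
    exact Fin.le_def.2 (by omega)
  · intro h hS
    have hT : j < T.card := hST ▸ hS
    rw [jthLargestF_eq S hS, jthLargestF_eq T hT]
    exact Nat.succ_le_succ (h hS hT)

theorem setLEF_iff_forall₂_asc {S T : Finset (Fin n)} :
    setLEF n S T ↔ Forall₂ (· ≤ ·) (asc S) (asc T) :=
  setLEF_iff_forall₂.trans forall₂_reverse_iff

theorem setLEF_trans {S T U : Finset (Fin n)} (h₁ : setLEF n S T) (h₂ : setLEF n T U) :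
    setLEF n S U :=
  ⟨h₁.1.trans h₂.1, fun j hj => (h₁.2 j hj).trans (h₂.2 j (h₁.1 ▸ hj))⟩

theorem jthLargestF_le_of_subset {U V : Finset (Fin n)} (h : U ⊆ V) {k : ℕ} (hk : k < U.card) :
    jthLargestF n U k ≤ jthLargestF n V k := by
  have hkV : k < V.card := hk.trans_le (Finset.card_le_card h)
  rw [jthLargestF_eq U hk, jthLargestF_eq V hkV, add_le_add_iff_right, Fin.val_fin_le]
  exact getElem_le_getElem_of_sublist (desc_sublist h) ((desc_pairwise V).imp le_of_lt) k _ _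

theorem asc_image_of_strictMono {m : ℕ} {b : Fin m → Fin n} (hb : StrictMono b) :
    asc (Finset.univ.image b) = List.ofFn b := by
  have himage : Finset.univ.image b = (List.ofFn b).toFinset := by ext; simp [mem_ofFn]
  rw [himage, asc_toFinset (sortedLT_ofFn_iff.2 hb).pairwise]

theorem subset_of_isLhd {C A B : Finset (Fin n)} (h : isLhd n C A B) : B ⊆ C := by
  obtain ⟨b, -, hmem, -, -, rfl⟩ := h
  simpa [Finset.image_subset_iff] using hmem

theorem setLEF_of_isLhd {C A B : Finset (Fin n)} (h : isLhd n C A B) : setLEF n A B := by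
  obtain ⟨b, hb, -, hdom, -, rfl⟩ := h
  rw [setLEF_iff_forall₂_asc, asc_image_of_strictMono hb, forall₂_iff_get]
  refine ⟨by simp, fun i h₁ h₂ => ?_⟩
  have hi : i < A.card := by simpa using h₁
  have hdom_i := hdom ⟨i, hi⟩
  rw [jthSmallestF_eq A hi] at hdom_i
  simp only [get_eq_getElem, List.getElem_ofFn, ← Fin.val_fin_le]
  omega

theorem isLhd_greedyAbove {C A : Finset (Fin n)}
    (hAg : Forall₂ (· ≤ ·) (asc A) (greedyAbove (asc C) (asc A))) :
    isLhd n C A (greedyAbove (asc C) (asc A)).toFinset := by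
  set g := greedyAbove (asc C) (asc A)
  have hlen : g.length = A.card := by simpa using hAg.length_eq.symm
  have hg : g.Pairwise (· < ·) := (asc_pairwise C).sublist (greedyAbove_sublist _ _)
  refine ⟨fun k => g[k.1], fun k l hkl => hg.sortedLT.getElem_lt_getElem_of_lt hkl,
    fun k => mem_asc.1 ((greedyAbove_sublist _ _).subset (getElem_mem _)), fun k => ?_,
    fun k x hx hkx hprev => ?_, ?_⟩
  · rw [jthSmallestF_eq A k.2, add_le_add_iff_right, Fin.val_fin_le]
    exact hAg.get (by simp) (by omega)
  · rw [jthSmallestF_eq A k.2, add_le_add_iff_right, Fin.val_fin_le] at hkx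
    exact greedyAbove_getElem_le (asc_pairwise C) (asc_pairwise A) _ _ (mem_asc.2 hx) hkx
      fun j hj => hprev ⟨j, by omega⟩ hj
  · ext x
    simp only [mem_toFinset, Finset.mem_image, Finset.mem_univ, true_and, mem_iff_getElem]
    exact ⟨fun ⟨i, hi, hx⟩ => ⟨⟨i, hlen ▸ hi⟩, hx⟩, fun ⟨k, hk⟩ => ⟨k, by omega, hk⟩⟩

theorem exists_isLhd_setLEF {C A B' : Finset (Fin n)} (hB'C : B' ⊆ C) (hAB' : setLEF n A B') :
    ∃ B, isLhd n C A B ∧ setLEF n B B' := by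
  obtain ⟨hAg, hgB'⟩ := greedyAbove_spec (asc_pairwise C) (setLEF_iff_forall₂_asc.1 hAB')
    (asc_sublist hB'C)
  refine ⟨_, isLhd_greedyAbove hAg, ?_⟩
  rw [setLEF_iff_forall₂_asc, asc_toFinset ((asc_pairwise C).sublist (greedyAbove_sublist _ _))]
  exact hgB'

/-- The largest subset of `S` that is `≤ T` in the Gale order `setLEF`, if there is one:
`greedyAbove` in `(Fin n)ᵒᵈ`, where descending lists are increasing. -/
def maxBelow (S T : Finset (Fin n)) : Finset (Fin n) :=
  (greedyAbove (β := (Fin n)ᵒᵈ) (desc S) (desc T)).toFinset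

theorem desc_maxBelow (S T : Finset (Fin n)) :
    desc (maxBelow S T) = greedyAbove (β := (Fin n)ᵒᵈ) (desc S) (desc T) :=
  desc_toFinset ((desc_pairwise S).sublist (greedyAbove_sublist (β := (Fin n)ᵒᵈ) _ _))

theorem maxBelow_subset (S T : Finset (Fin n)) : maxBelow S T ⊆ S := fun _ hx =>
  mem_desc.1 ((greedyAbove_sublist (β := (Fin n)ᵒᵈ) _ _).subset (mem_toFinset.1 hx))

theorem maxBelow_spec {S T B : Finset (Fin n)} (hBS : B ⊆ S) (hBT : setLEF n B T) :
    setLEF n (maxBelow S T) T ∧ setLEF n B (maxBelow S T) := by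
  obtain ⟨h₁, h₂⟩ := greedyAbove_spec (β := (Fin n)ᵒᵈ) (desc_pairwise S)
    (setLEF_iff_forall₂.1 hBT).flip (desc_sublist hBS)
  rw [setLEF_iff_forall₂, setLEF_iff_forall₂, desc_maxBelow]
  exact ⟨h₁.flip, h₂.flip⟩

theorem maxBelow_mono {S T T' B : Finset (Fin n)} (hT : T' ⊆ T) (hBS : B ⊆ S)
    (hBT : setLEF n B T) : maxBelow S T' ⊆ maxBelow S T := by
  have hfull := (setLEF_iff_forall₂.1 (maxBelow_spec hBS hBT).1).length_eq
  rw [desc_maxBelow] at hfull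
  intro x hx
  exact mem_toFinset.2 (greedyAbove_subset_of_sublist (β := (Fin n)ᵒᵈ) (desc_pairwise S)
    (desc_pairwise T) (desc_sublist hT) hfull (mem_toFinset.1 hx))

@[simp] theorem maxBelow_empty (S : Finset (Fin n)) : maxBelow S ∅ = ∅ := by
  simp only [maxBelow, desc, asc, Finset.sort_empty, reverse_nil, greedyAbove, toFinset_nil]
  rfl

theorem col_one (α : Fin n → ℕ) : col n α 1 = suppC n α := by
  ext i
  simp [col, suppC, Nat.one_le_iff_ne_zero, Nat.pos_iff_ne_zero]

theorem col_antitone (α : Fin n → ℕ) {c c' : ℕ} (h : c ≤ c') : col n α c' ⊆ col n α c := by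
  intro i
  simp only [col, Finset.mem_filter, Finset.mem_univ, true_and]
  omega

theorem col_eq_empty (α : Fin n → ℕ) {c : ℕ} (h : Finset.univ.sup α < c) : col n α c = ∅ := by
  ext i
  have := Finset.le_sup (f := α) (Finset.mem_univ i)
  simp only [col, Finset.mem_filter, Finset.mem_univ, true_and, Finset.notMem_empty, iff_false]
  omega

theorem col_sub_one (μ : Fin n → ℕ) {c : ℕ} (hc : 1 ≤ c) :
    col n (fun i => μ i - 1) c = col n μ (c + 1) := by
  ext i
  simp only [col, Finset.mem_filter, Finset.mem_univ, true_and]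
  omega

theorem col_findGreatest {G : ℕ → Finset (Fin n)} {N : ℕ} (hG : ∀ c, 1 ≤ c → G (c + 1) ⊆ G c)
    (hN : ∀ c, N < c → G c = ∅) {c : ℕ} (hc : 1 ≤ c) :
    col n (fun i => Nat.findGreatest (fun c => i ∈ G c) N) c = G c := by
  have hanti : AntitoneOn G {x | 1 ≤ x} := antitoneOn_nat_Ici_of_succ_le hG
  ext i
  simp only [col, Finset.mem_filter, Finset.mem_univ, true_and]
  constructor
  · intro h
    have hne : Nat.findGreatest (fun c => i ∈ G c) N ≠ 0 := by omega
    exact hanti hc (hc.trans h) h (Nat.findGreatest_of_ne_zero rfl hne)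
  · intro hi
    have hcN : c ≤ N := by
      by_contra hcN
      simp [hN c (by omega)] at hi
    exact Nat.le_findGreatest hcN hi

theorem exists_isBruhatMax (α : Fin n → ℕ) (S : Finset (Fin n))
    (h : ∀ c, 1 ≤ c → ∃ B ⊆ S, setLEF n B (col n α c)) :
    ∃ μ, isBruhatMax n α S μ ∧ ∀ c, 1 ≤ c → col n μ c = maxBelow S (col n α c) := by
  have hcol := fun c (hc : 1 ≤ c) => col_findGreatest (N := Finset.univ.sup α)
    (G := fun c => maxBelow S (col n α c))
    (fun c hc => by
      obtain ⟨B, hBS, hB⟩ := h c hc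
      exact maxBelow_mono (col_antitone α c.le_succ) hBS hB)
    (fun c hc => by simp [col_eq_empty α hc]) hc
  refine ⟨_, ⟨fun c hc => ?_, ?_, fun γ hγ hγS c hc => ?_⟩, hcol⟩
  · obtain ⟨B, hBS, hB⟩ := h c hc
    rw [hcol c hc]
    exact (maxBelow_spec hBS hB).1
  · rw [← col_one, hcol 1 le_rfl]
    exact maxBelow_subset _ _
  · rw [hcol c hc]
    exact (maxBelow_spec ((col_antitone γ hc).trans ((col_one γ).trans_subset hγS)) (hγ c hc)).2

theorem forall_one_le_iff {P : ℕ → Prop} :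
    (∀ c, 1 ≤ c → P c) ↔ P 1 ∧ ∀ c, 1 ≤ c → P (c + 1) := by
  refine ⟨fun h => ⟨h 1 le_rfl, fun c _ => h (c + 1) (by omega)⟩, fun ⟨h₁, h⟩ c hc => ?_⟩
  obtain ⟨c, rfl⟩ : ∃ c', c = c' + 1 := ⟨c - 1, by omega⟩
  rcases Nat.eq_zero_or_pos c with rfl | hc'
  exacts [h₁, h c hc']

theorem lhdChain_range_one (L : ℕ → Finset (Fin n)) (B : Finset (Fin n)) :
    lhdChain n ((List.range 1).map fun i => L (i + 1)) B ↔ B = L 1 := Iff.rfl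

theorem lhdChain_range_succ (L : ℕ → Finset (Fin n)) {c : ℕ} (hc : 1 ≤ c) (B : Finset (Fin n)) :
    lhdChain n ((List.range (c + 1)).map fun i => L (i + 1)) B ↔
      ∃ B', lhdChain n ((List.range c).map fun i => L (i + 1 + 1)) B' ∧ isLhd n (L 1) B' B := by
  obtain ⟨c, rfl⟩ : ∃ c', c = c' + 1 := ⟨c - 1, by omega⟩
  simp only [List.range_succ_eq_map, List.map_cons, List.map_map]
  rfl

theorem subset_of_lhdChain_range (L : ℕ → Finset (Fin n)) {c : ℕ} (hc : 1 ≤ c)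
    {B : Finset (Fin n)} (h : lhdChain n ((List.range c).map fun i => L (i + 1)) B) : B ⊆ L 1 := by
  obtain ⟨c, rfl⟩ : ∃ c', c = c' + 1 := ⟨c - 1, by omega⟩
  rcases Nat.eq_zero_or_pos c with rfl | hc'
  · exact ((lhdChain_range_one L B).1 h).subset
  · obtain ⟨B', -, hlhd⟩ := (lhdChain_range_succ L hc' B).1 h
    exact subset_of_isLhd hlhd

theorem exists_lhdChain_tail {L : ℕ → Finset (Fin n)} {T : Finset (Fin n)} {c : ℕ} (hc : 1 ≤ c)
    (h : ∃ B, lhdChain n ((List.range (c + 1)).map fun i => L (i + 1)) B ∧ setLEF n B T) :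
    ∃ B', lhdChain n ((List.range c).map fun i => L (i + 1 + 1)) B' ∧
      setLEF n B' (maxBelow (L 1) T) := by
  obtain ⟨B, hB, hBT⟩ := h
  obtain ⟨B', hB', hlhd⟩ := (lhdChain_range_succ L hc B).1 hB
  exact ⟨B', hB', setLEF_trans (setLEF_of_isLhd hlhd) (maxBelow_spec (subset_of_isLhd hlhd) hBT).2⟩

theorem exists_lhdChain_of_tail {L : ℕ → Finset (Fin n)} {X T : Finset (Fin n)} {c : ℕ}
    (hc : 1 ≤ c) (hX : X ⊆ L 1) (hXT : setLEF n X T)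
    (h : ∃ B', lhdChain n ((List.range c).map fun i => L (i + 1 + 1)) B' ∧ setLEF n B' X) :
    ∃ B, lhdChain n ((List.range (c + 1)).map fun i => L (i + 1)) B ∧ setLEF n B T := by
  obtain ⟨B', hB', hB'X⟩ := h
  obtain ⟨B, hlhd, hBX⟩ := exists_isLhd_setLEF hX hB'X
  exact ⟨B, (lhdChain_range_succ L hc B).2 ⟨B', hB', hlhd⟩, setLEF_trans hBX hXT⟩

theorem setLEF_suppC_of_memRSVT {α : Fin n → ℕ} {L E : ℕ → Finset (Fin n)}
    (h : memRSVT n α L E) : setLEF n (L 1) (suppC n α) := by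
  obtain ⟨B, hB, hBα⟩ := h.2.2.2.2 1 le_rfl
  rwa [← col_one, ← (lhdChain_range_one L B).1 hB]

theorem exists_isBruhatMax_memRSVT_tail {α : Fin n → ℕ} {L E : ℕ → Finset (Fin n)}
    (h : memRSVT n α L E) : ∃ μ, isBruhatMax n α (L 1) μ ∧
      memRSVT n (fun i => μ i - 1) (fun c => L (c + 1)) (fun c => E (c + 1)) := by
  obtain ⟨hdisj, hcard, hdec, hextra, hkey⟩ := h
  obtain ⟨μ, hμ, hcol⟩ := exists_isBruhatMax α (L 1) fun c hc => by
    obtain ⟨B, hB, hBα⟩ := hkey c hc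
    exact ⟨B, subset_of_lhdChain_range L hc hB, hBα⟩
  have hcol' : ∀ c, 1 ≤ c → col n (fun i => μ i - 1) c = maxBelow (L 1) (col n α (c + 1)) :=
    fun c hc => (col_sub_one μ hc).trans (hcol (c + 1) (by omega))
  refine ⟨μ, hμ, fun c hc => hdisj (c + 1) (by omega), fun c hc => ?_,
    fun c hc => hdec (c + 1) (by omega), fun c hc => hextra (c + 1) (by omega), fun c hc => ?_⟩
  · obtain ⟨B, hB, hBα⟩ := hkey (c + 1) (by omega)
    rw [hcol' c hc, (maxBelow_spec (subset_of_lhdChain_range L (by omega) hB) hBα).1.1]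
    exact hcard (c + 1) (by omega)
  · rw [hcol' c hc]
    exact exists_lhdChain_tail hc (hkey (c + 1) (by omega))

theorem memRSVT_of_tail {α μ : Fin n → ℕ} {L E : ℕ → Finset (Fin n)}
    (hdisj : Disjoint (L 1) (E 1)) (hsupp : setLEF n (L 1) (suppC n α))
    (hextra : ∀ e ∈ E 1,
      ((L 2).filter (fun l => e < l)).card < ((L 1).filter (fun l => e < l)).card)
    (hμα : bruhatLE n μ α) (hμL : suppC n μ ⊆ L 1)
    (ht : memRSVT n (fun i => μ i - 1) (fun c => L (c + 1)) (fun c => E (c + 1))) :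
    memRSVT n α L E := by
  obtain ⟨ht_disj, ht_card, ht_dec, ht_extra, ht_key⟩ := ht
  have hcol : ∀ c, 1 ≤ c → col n μ c ⊆ L 1 :=
    fun c hc => (col_antitone μ hc).trans ((col_one μ).trans_subset hμL)
  have hL2 : setLEF n (L 2) (col n μ 2) := by
    obtain ⟨B, hB, hBμ⟩ := ht_key 1 le_rfl
    rwa [col_sub_one μ le_rfl, (lhdChain_range_one (fun c => L (c + 1)) B).1 hB] at hBμ
  refine ⟨forall_one_le_iff.2 ⟨hdisj, ht_disj⟩, forall_one_le_iff.2 ⟨?_, fun c hc => ?_⟩,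
    forall_one_le_iff.2 ⟨fun k hk => ?_, ht_dec⟩, forall_one_le_iff.2 ⟨hextra, ht_extra⟩,
    forall_one_le_iff.2 ⟨⟨L 1, rfl, by rwa [col_one]⟩, fun c hc => ?_⟩⟩
  · rw [col_one]
    exact hsupp.1
  · rw [← (hμα (c + 1) (by omega)).1, ← col_sub_one μ hc]
    exact ht_card c hc
  · exact (hL2.2 k hk).trans (jthLargestF_le_of_subset (hcol 2 (by omega)) (hL2.1 ▸ hk))
  · have hkey := ht_key c hc
    rw [col_sub_one μ hc] at hkey
    exact exists_lhdChain_of_tail hc (hcol (c + 1) (by omega)) (hμα (c + 1) (by omega)) hkey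

end RSVT

/-- recursive description of `RSVT(α)`. A diagram pair `(L 1, E 1, t)`
(where `t` has columns `L (c+1), E (c+1)`) is in `RSVT(α)` iff: `L 1, E 1` are disjoint;
`L 1 ≤ supp α`; for each `e ∈ E 1`, `|(e,n] ∩ L 1| > |(e,n] ∩ L 2|`; and
`t ∈ RSVT(M̄(α, L 1))`. -/
theorem stmt16 (n : ℕ) (α : Fin n → ℕ) (L E : ℕ → Finset (Fin n)) :
    memRSVT n α L E ↔
      (Disjoint (L 1) (E 1) ∧
       setLEF n (L 1) (suppC n α) ∧
       (∀ e ∈ E 1,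
         ((L 2).filter (fun l => e < l)).card < ((L 1).filter (fun l => e < l)).card) ∧
       (∃ μ : Fin n → ℕ, isBruhatMax n α (L 1) μ ∧
         memRSVT n (fun i => μ i - 1) (fun c => L (c+1)) (fun c => E (c+1)))) := by
  constructor
  · intro h
    exact ⟨h.1 1 le_rfl, RSVT.setLEF_suppC_of_memRSVT h, h.2.2.2.1 1 le_rfl,
      RSVT.exists_isBruhatMax_memRSVT_tail h⟩
  · rintro ⟨hdisj, hsupp, hextra, μ, ⟨hμα, hμL, -⟩, ht⟩
    exact RSVT.memRSVT_of_tail hdisj hsupp hextra hμα hμL ht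
end
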